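/- Let X be a quasi-Polish space and E ⊆ X² an equivalence relation such that the quotient map X → X/E (with quotient topology) is open. Then the following are equivalent: (1) X/E is quasi-Polish; (2) X/E is T₀; (3) E is Π⁰₂ in X²; (4) every E-class [x]_E is Π⁰₂ in X. -/

import Mathlib

open Set

/-- A `Π⁰₂` set: a countable intersection of sets `(U ⇒ V) = Uᶜ ∪ V` with `U, V` open. -/
def IsPi02 {X : Type*} [TopologicalSpace X] (A : Set X) : Prop :=
  ∃ U V : ℕ → Set X, (∀ n, IsOpen (U n)) ∧ (∀ n, IsOpen (V n)) ∧
    A = ⋂ n, ((U n)ᶜ ∪ V n)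

/-- A quasi-Polish space: homeomorphic (via an embedding) to a `Π⁰₂` subspace of
the countable power `ℕ → Prop` of the Sierpiński space. -/
def QuasiPolish (X : Type*) [TopologicalSpace X] : Prop :=
  ∃ f : X → (ℕ → Prop), Topology.IsEmbedding f ∧ IsPi02 (Set.range f)

/-!
Fix an embedding `f` of `X` onto a `Π⁰₂` subset of `ℕ → Prop`, and let `q : X → X/E`.

`T₀ ⇒ E ∈ Π⁰₂`: `X/E` is second countable, so its diagonal is `Π⁰₂`, and `E` is the preimage of
that diagonal under `q × q`. `Π⁰₂` classes `⇒ T₀`: if `q x` and `q y` are topologically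
indistinguishable, openness of `q` gives `[x]` and `[y]` the same closure, and two `Π⁰₂` subsets of
`ℕ → Prop` with the same closure meet, by a Baire category argument. `T₀ ⇒` quasi-Polish: the sets
`q (f⁻¹ (cylinder G))` form a countable basis of the `T₀` space `X/E`, so
`y ↦ (G ↦ y ∈ q (f⁻¹ (cylinder G)))` embeds `X/E` into a countable power of Sierpiński space.
Its range is cut out by countably many implications between open conditions; that every code
satisfying them comes from a point is again a Baire category argument, run inside `range f`.
-/

open Topology TopologicalSpace

section Pi02

variable {X Y : Type*} [TopologicalSpace X] [TopologicalSpace Y]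

theorem isPi02_iInter_compl_union {ι : Type*} [Countable ι] {U V : ι → Set X}
    (hU : ∀ i, IsOpen (U i)) (hV : ∀ i, IsOpen (V i)) : IsPi02 (⋂ i, (U i)ᶜ ∪ V i) := by
  rcases isEmpty_or_nonempty ι with hι | hι
  · exact ⟨fun _ => ∅, fun _ => ∅, fun _ => isOpen_empty, fun _ => isOpen_empty, by simp⟩
  · obtain ⟨e, he⟩ := exists_surjective_nat ι
    exact ⟨U ∘ e, V ∘ e, fun n => hU (e n), fun n => hV (e n),
      (he.iInter_comp fun i => (U i)ᶜ ∪ V i).symm⟩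

theorem isPi02_setOf_imp {p q : X → Prop} (hp : IsOpen {x | p x}) (hq : IsOpen {x | q x}) :
    IsPi02 {x | p x → q x} :=
  ⟨fun _ => {x | p x}, fun _ => {x | q x}, fun _ => hp, fun _ => hq, by
    ext x
    simp [imp_iff_not_or]⟩

theorem IsOpen.isPi02 {U : Set X} (hU : IsOpen U) : IsPi02 U :=
  ⟨fun _ => univ, fun _ => U, fun _ => isOpen_univ, fun _ => hU, by
    simp only [compl_univ, empty_union, iInter_const]⟩

theorem IsPi02.iInter {ι : Type*} [Countable ι] {A : ι → Set X} (hA : ∀ i, IsPi02 (A i)) :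
    IsPi02 (⋂ i, A i) := by
  choose U V hU hV hA using hA
  have h := isPi02_iInter_compl_union (ι := ι × ℕ) (fun p => hU p.1 p.2) (fun p => hV p.1 p.2)
  convert h using 1
  ext x
  simp [hA, Prod.forall]

theorem IsPi02.inter {A B : Set X} (hA : IsPi02 A) (hB : IsPi02 B) : IsPi02 (A ∩ B) := by
  rw [inter_eq_iInter]
  exact IsPi02.iInter fun b => by cases b <;> assumption

theorem IsPi02.preimage {f : X → Y} (hf : Continuous f) {A : Set Y} (hA : IsPi02 A) :
    IsPi02 (f ⁻¹' A) := by
  obtain ⟨U, V, hU, hV, rfl⟩ := hA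
  simpa only [preimage_iInter, preimage_union, preimage_compl] using
    isPi02_iInter_compl_union (fun n => (hU n).preimage hf) (fun n => (hV n).preimage hf)

theorem IsPi02.exists_preimage_eq {f : X → Y} (hf : IsInducing f) {A : Set X} (hA : IsPi02 A) :
    ∃ B : Set Y, IsPi02 B ∧ f ⁻¹' B = A := by
  obtain ⟨U, V, hU, hV, rfl⟩ := hA
  choose U' hU' hUU' using fun n => hf.isOpen_iff.1 (hU n)
  choose V' hV' hVV' using fun n => hf.isOpen_iff.1 (hV n)
  refine ⟨⋂ n, (U' n)ᶜ ∪ V' n, isPi02_iInter_compl_union hU' hV', ?_⟩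
  simp only [preimage_iInter, preimage_union, preimage_compl, hUU', hVV']

theorem IsPi02.image_of_isInducing {A : Set X} (hA : IsPi02 A) {f : X → Y} (hf : IsInducing f)
    (hf' : IsPi02 (range f)) : IsPi02 (f '' A) := by
  obtain ⟨B, hB, rfl⟩ := hA.exists_preimage_eq hf
  rw [image_preimage_eq_range_inter]
  exact hf'.inter hB

theorem isPi02_diagonal [T0Space X] [SecondCountableTopology X] : IsPi02 (diagonal X) := by
  obtain ⟨b, hbc, -, hb⟩ := exists_countable_basis X
  have : Countable b := hbc.to_subtype
  have hdiag : diagonal X = ⋂ B : b, {p : X × X | p.1 ∈ (B : Set X) → p.2 ∈ (B : Set X)} ∩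
      {p | p.2 ∈ (B : Set X) → p.1 ∈ (B : Set X)} := by
    ext p
    simp only [mem_diagonal_iff, mem_iInter, mem_inter_iff, mem_ofPred_eq, Subtype.forall,
      ← inseparable_iff_eq, hb.inseparable_iff, iff_def]
  rw [hdiag]
  refine IsPi02.iInter fun B => ?_
  have h₁ := (hb.isOpen B.2).preimage (continuous_fst (X := X) (Y := X))
  have h₂ := (hb.isOpen B.2).preimage (continuous_snd (X := X) (Y := X))
  exact (isPi02_setOf_imp h₁ h₂).inter (isPi02_setOf_imp h₂ h₁)

end Pi02

theorem QuasiPolish.t0Space {X : Type*} [TopologicalSpace X] (hX : QuasiPolish X) : T0Space X :=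
  let ⟨_, hf, _⟩ := hX
  hf.t0Space

theorem QuasiPolish.secondCountableTopology {X : Type*} [TopologicalSpace X]
    (hX : QuasiPolish X) : SecondCountableTopology X :=
  let ⟨_, hf, _⟩ := hX
  hf.secondCountableTopology

theorem QuasiPolish.of_isEmbedding {X ι : Type*} [TopologicalSpace X] (e : ι ≃ ℕ)
    {g : X → ι → Prop} (hg : IsEmbedding g) (hr : IsPi02 (range g)) : QuasiPolish X := by
  let h : (ι → Prop) ≃ₜ (ℕ → Prop) := Homeomorph.piCongrLeft (Y := fun _ => Prop) e
  refine ⟨h ∘ g, h.isEmbedding.comp hg, ?_⟩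
  rw [range_comp, h.image_eq_preimage_symm]
  exact hr.preimage h.symm.continuous

theorem TopologicalSpace.IsTopologicalBasis.isEmbedding_mem {Y ι : Type*} [TopologicalSpace Y]
    [T0Space Y] {B : ι → Set Y} (hB : IsTopologicalBasis (range B)) :
    IsEmbedding fun y i => y ∈ B i := by
  refine ⟨?_, fun y z h => (hB.inseparable_iff.2 ?_).eq⟩
  · convert inducing_iInf_to_pi fun i (y : Y) => y ∈ B i
    refine le_antisymm (le_iInf fun i => continuous_iff_le_induced.1 ?_) ?_
    · exact continuous_Prop.2 (hB.isOpen ⟨i, rfl⟩)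
    · rw [hB.eq_generateFrom]
      refine le_generateFrom ?_
      rintro _ ⟨i, rfl⟩
      exact iInf_le (fun i => induced (· ∈ B i) sierpinskiSpace) i _
        (isOpen_induced_iff.2 ⟨{True}, isOpen_singleton_true, by ext; simp⟩)
  · rintro _ ⟨i, rfl⟩
    exact iff_of_eq (congrFun h i)

theorem IsOpen.mem_of_imp {u : Set Prop} (hu : IsOpen u) {p q : Prop} (hp : p ∈ u)
    (hpq : p → q) : q ∈ u := by
  by_cases h : p
  · simpa [eq_true h, eq_true (hpq h)] using hp
  · have : q ⤳ False := by simp [specializes_iff_nhds, nhds_false]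
    exact this.mem_open hu (by simpa [eq_false h] using hp)

theorem isOpen_setOf_apply {ι : Type*} (i : ι) : IsOpen {β : ι → Prop | β i} :=
  continuous_Prop.1 (continuous_apply i)

theorem isOpen_setOf_exists_and_apply {ι : Type*} (c : ι → Prop) :
    IsOpen {β : ι → Prop | ∃ i, c i ∧ β i} := by
  simp only [ofPred_exists]
  exact isOpen_iUnion fun i => isOpen_const.inter (isOpen_setOf_apply i)

def cylinder (F : Finset ℕ) : Set (ℕ → Prop) := {α | ∀ n ∈ F, α n}

theorem isOpen_cylinder (F : Finset ℕ) : IsOpen (cylinder F) := by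
  simp only [cylinder, ofPred_forall]
  exact isOpen_biInter_finset fun n _ => isOpen_setOf_apply n

theorem mem_cylinder_empty (α : ℕ → Prop) : α ∈ cylinder ∅ :=
  fun _ h => absurd h (Finset.notMem_empty _)

theorem cylinder_anti : Antitone cylinder := fun _ _ h _ hα n hn => hα n (h hn)

theorem cylinder_union (F G : Finset ℕ) : cylinder (F ∪ G) = cylinder F ∩ cylinder G := by
  ext α
  simp [cylinder, or_imp, forall_and]

theorem exists_cylinder_subset {W : Set (ℕ → Prop)} (hW : IsOpen W) {α : ℕ → Prop} (hα : α ∈ W) :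
    ∃ F, α ∈ cylinder F ∧ cylinder F ⊆ W := by
  classical
  obtain ⟨I, u, hu, hIu⟩ := isOpen_pi_iff.1 hW α hα
  refine ⟨I.filter α, fun n hn => (Finset.mem_filter.1 hn).2, fun β hβ => hIu fun i hi => ?_⟩
  exact (hu i hi).1.mem_of_imp (hu i hi).2 fun hαi => hβ i (Finset.mem_filter.2 ⟨hi, hαi⟩)

theorem exists_superset_cylinder_subset {W : Set (ℕ → Prop)} (hW : IsOpen W) {α : ℕ → Prop}
    (hαW : α ∈ W) {G : Finset ℕ} (hαG : α ∈ cylinder G) :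
    ∃ G', G ⊆ G' ∧ α ∈ cylinder G' ∧ cylinder G' ⊆ W := by
  obtain ⟨F, hαF, hFW⟩ := exists_cylinder_subset hW hαW
  refine ⟨G ∪ F, Finset.subset_union_left, ?_, ?_⟩
  · rw [cylinder_union]; exact ⟨hαG, hαF⟩
  · rw [cylinder_union]; exact inter_subset_right.trans hFW

theorem isTopologicalBasis_cylinder : IsTopologicalBasis (range cylinder) := by
  refine isTopologicalBasis_of_isOpen_of_nhds (by rintro _ ⟨F, rfl⟩; exact isOpen_cylinder F) ?_
  intro α W hαW hW
  obtain ⟨F, hαF, hFW⟩ := exists_cylinder_subset hW hαW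
  exact ⟨_, ⟨F, rfl⟩, hαF, hFW⟩

theorem exists_superset_preimage_cylinder_subset {X : Type*} [TopologicalSpace X]
    {f : X → ℕ → Prop} (hf : IsInducing f) {O : Set X} (hO : IsOpen O) {x : X} (hx : x ∈ O)
    {G : Finset ℕ} (hxG : f x ∈ cylinder G) :
    ∃ G', G ⊆ G' ∧ f x ∈ cylinder G' ∧ f ⁻¹' cylinder G' ⊆ O := by
  obtain ⟨W, hW, rfl⟩ := hf.isOpen_iff.1 hO
  obtain ⟨G', hGG', hxG', hG'W⟩ := exists_superset_cylinder_subset hW hx hxG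
  exact ⟨G', hGG', hxG', preimage_mono hG'W⟩

def limPoint (s : ℕ → Finset ℕ) : ℕ → Prop := fun n => ∃ i, n ∈ s i

theorem limPoint_mem_cylinder (s : ℕ → Finset ℕ) (i : ℕ) : limPoint s ∈ cylinder (s i) :=
  fun _ hn => ⟨i, hn⟩

theorem Monotone.exists_subset_of_limPoint_mem_cylinder {s : ℕ → Finset ℕ} (hs : Monotone s)
    {F : Finset ℕ} (hF : limPoint s ∈ cylinder F) : ∃ i, F ⊆ s i := by
  have hdir : Directed (· ⊆ ·) fun i => (s i : Set ℕ) :=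
    hs.directed_le.mono_comp _ fun _ _ h => Finset.coe_subset.2 h
  obtain ⟨i, hi⟩ := hdir.exists_mem_subset_of_finset_subset_biUnion (s := F)
    fun n hn => mem_iUnion.2 (hF n hn)
  exact ⟨i, Finset.coe_subset.1 hi⟩

theorem Monotone.limPoint_mem_iff {s : ℕ → Finset ℕ} (hs : Monotone s) {W : Set (ℕ → Prop)}
    (hW : IsOpen W) : limPoint s ∈ W ↔ ∃ i, cylinder (s i) ⊆ W := by
  refine ⟨fun h => ?_, fun ⟨i, hi⟩ => hi (limPoint_mem_cylinder s i)⟩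
  obtain ⟨F, hF, hFW⟩ := exists_cylinder_subset hW h
  obtain ⟨i, hi⟩ := hs.exists_subset_of_limPoint_mem_cylinder hF
  exact ⟨i, (cylinder_anti hi).trans hFW⟩

theorem exists_monotone_mem_meets {α κ : Type*} [Preorder α] [Countable κ] {P : Set α}
    (hP : P.Nonempty) (D : κ → Set α) (hD : ∀ k, ∀ a ∈ P, ∃ b ∈ P, a ≤ b ∧ b ∈ D k) :
    ∃ s : ℕ → α, Monotone s ∧ (∀ n, s n ∈ P) ∧ ∀ k, ∃ n, s n ∈ D k := by
  have := Encodable.ofCountable κ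
  obtain ⟨a, ha⟩ := hP
  let 𝒟 : κ → Order.Cofinal P := fun k =>
    { carrier := {b | (b : α) ∈ D k}
      isCofinal := fun b => by
        obtain ⟨c, hc, hbc, hcD⟩ := hD k b b.2
        exact ⟨⟨c, hc⟩, hcD, hbc⟩ }
  let s := Order.sequenceOfCofinals (⟨a, ha⟩ : P) 𝒟
  exact ⟨fun n => s n, fun _ _ h => Order.sequenceOfCofinals.monotone (⟨a, ha⟩ : P) 𝒟 h,
    fun n => (s n).2,
    fun k => ⟨_, Order.sequenceOfCofinals.encode_mem _ 𝒟 k⟩⟩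

theorem exists_monotone_limPoint_mem {ι κ : Type*} [Countable ι] [Countable κ]
    {P : Set (Finset ℕ)} (hP : P.Nonempty) {U V : ι → Set (ℕ → Prop)} (hU : ∀ i, IsOpen (U i))
    (hUV : ∀ G ∈ P, ∀ i, cylinder G ⊆ U i → ∃ G' ∈ P, G ⊆ G' ∧ cylinder G' ⊆ V i)
    (D : κ → Set (Finset ℕ)) (hD : ∀ k, ∀ G ∈ P, ∃ G' ∈ P, G ⊆ G' ∧ G' ∈ D k) :
    ∃ s : ℕ → Finset ℕ, Monotone s ∧ (∀ n, s n ∈ P) ∧ (∀ k, ∃ n, s n ∈ D k) ∧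
      limPoint s ∈ ⋂ i, (U i)ᶜ ∪ V i := by
  -- `G` decides `U i ⇒ V i`: either it forces `V i`, or no extension of it forces `U i`.
  let decides (i : ι) : Set (Finset ℕ) :=
    {G | cylinder G ⊆ V i ∨ ∀ G' ∈ P, G ⊆ G' → ¬ cylinder G' ⊆ U i}
  have hdecides : ∀ i, ∀ G ∈ P, ∃ G' ∈ P, G ⊆ G' ∧ G' ∈ decides i := by
    intro i G hG
    by_cases h : ∃ G' ∈ P, G ⊆ G' ∧ cylinder G' ⊆ U i
    · obtain ⟨G', hG', hGG', hG'U⟩ := h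
      obtain ⟨G'', hG'', hG'G'', hG''V⟩ := hUV G' hG' i hG'U
      exact ⟨G'', hG'', hGG'.trans hG'G'', Or.inl hG''V⟩
    · push Not at h
      exact ⟨G, hG, subset_rfl, Or.inr h⟩
  obtain ⟨s, hs, hsP, hsD⟩ := exists_monotone_mem_meets hP (Sum.elim D decides)
    (Sum.rec hD hdecides)
  refine ⟨s, hs, hsP, fun k => hsD (Sum.inl k), mem_iInter.2 fun i => ?_⟩
  rw [mem_union, mem_compl_iff, ← imp_iff_not_or]
  intro hsU
  obtain ⟨m, hm⟩ := (hs.limPoint_mem_iff (hU i)).1 hsU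
  obtain ⟨n, hn | hn⟩ := hsD (Sum.inr i)
  · exact hn (limPoint_mem_cylinder s n)
  · exact absurd ((cylinder_anti (hs (le_max_left m n))).trans hm)
      (hn _ (hsP _) (hs (le_max_right m n)))

theorem exists_superset_cylinder_inter_nonempty {A U V : Set (ℕ → Prop)} (hV : IsOpen V)
    (hA : A ⊆ Uᶜ ∪ V) {G : Finset ℕ} (hG : (cylinder G ∩ A).Nonempty) (hGU : cylinder G ⊆ U) :
    ∃ G', G ⊆ G' ∧ (cylinder G' ∩ A).Nonempty ∧ cylinder G' ⊆ V := by
  obtain ⟨α, hαG, hαA⟩ := hG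
  have hαV : α ∈ V := (hA hαA).resolve_left (not_not_intro (hGU hαG))
  obtain ⟨G', hGG', hαG', hG'V⟩ := exists_superset_cylinder_subset hV hαV hαG
  exact ⟨G', hGG', ⟨α, hαG', hαA⟩, hG'V⟩

theorem IsPi02.inter_nonempty_of_subset_closure {A B : Set (ℕ → Prop)} (hA : IsPi02 A)
    (hB : IsPi02 B) (hne : A.Nonempty) (hAB : A ⊆ closure B) (hBA : B ⊆ closure A) :
    (A ∩ B).Nonempty := by
  obtain ⟨U₁, V₁, hU₁, hV₁, hA⟩ := hA
  obtain ⟨U₂, V₂, hU₂, hV₂, hB⟩ := hB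
  have transfer {C D : Set (ℕ → Prop)} (hCD : C ⊆ closure D) (G : Finset ℕ)
      (hG : (cylinder G ∩ C).Nonempty) : (cylinder G ∩ D).Nonempty :=
    let ⟨_, hαG, hαC⟩ := hG
    mem_closure_iff.1 (hCD hαC) _ (isOpen_cylinder G) hαG
  have hUV : ∀ G ∈ {G | (cylinder G ∩ A).Nonempty}, ∀ i, cylinder G ⊆ Sum.elim U₁ U₂ i →
      ∃ G' ∈ {G | (cylinder G ∩ A).Nonempty}, G ⊆ G' ∧ cylinder G' ⊆ Sum.elim V₁ V₂ i := by
    rintro G hG (n | n) hGU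
    · obtain ⟨G', hGG', hG'A, hG'V⟩ := exists_superset_cylinder_inter_nonempty (hV₁ n)
        (hA ▸ iInter_subset _ n) hG hGU
      exact ⟨G', hG'A, hGG', hG'V⟩
    · obtain ⟨G', hGG', hG'B, hG'V⟩ := exists_superset_cylinder_inter_nonempty (hV₂ n)
        (hB ▸ iInter_subset _ n) (transfer hAB G hG) hGU
      exact ⟨G', transfer hBA G' hG'B, hGG', hG'V⟩
  obtain ⟨s, -, -, -, hlim⟩ := exists_monotone_limPoint_mem
    ⟨∅, hne.imp fun α hα => ⟨mem_cylinder_empty α, hα⟩⟩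
    (Sum.rec hU₁ hU₂) hUV (fun k : Empty => k.elim) (fun k => k.elim)
  rw [iInter_sum] at hlim
  exact ⟨limPoint s, hA ▸ hlim.1, hB ▸ hlim.2⟩

section Quotient

variable {X : Type*} [TopologicalSpace X] {s : Setoid X}

theorem setOf_rel_subset_closure_of_specializes (hopen : IsOpenMap (Quotient.mk s)) {x y : X}
    (h : Quotient.mk s y ⤳ Quotient.mk s x) : {z | s.r x z} ⊆ closure {z | s.r y z} := by
  intro z hz
  rw [mem_closure_iff]
  intro O hO hzO
  obtain ⟨w, hwO, hw⟩ := h.mem_open (hopen O hO) ⟨z, hzO, Quotient.sound (s.symm hz)⟩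
  exact ⟨w, hwO, Quotient.exact hw.symm⟩

theorem t0Space_quotient_of_forall_isPi02 (hX : QuasiPolish X) (hopen : IsOpenMap (Quotient.mk s))
    (h : ∀ x, IsPi02 {y | s.r x y}) : T0Space (Quotient s) := by
  obtain ⟨f, hf, hr⟩ := hX
  rw [t0Space_iff_inseparable]
  rintro ⟨x⟩ ⟨y⟩ hxy
  have hcl {x y : X} (hxy : Inseparable (Quotient.mk s x) (Quotient.mk s y)) :
      f '' {z | s.r x z} ⊆ closure (f '' {z | s.r y z}) :=
    (image_mono (setOf_rel_subset_closure_of_specializes hopen hxy.specializes')).trans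
      (image_closure_subset_closure_image hf.continuous)
  obtain ⟨_, ⟨c, hc, rfl⟩, c', hc', hcc'⟩ := IsPi02.inter_nonempty_of_subset_closure
    ((h x).image_of_isInducing hf.isInducing hr) ((h y).image_of_isInducing hf.isInducing hr)
    ⟨f x, x, s.refl x, rfl⟩ (hcl hxy) (hcl hxy.symm)
  obtain rfl := hf.injective hcc'
  exact Quotient.sound (s.trans hc (s.symm hc'))

theorem isPi02_rel_of_t0Space [SecondCountableTopology X] (hopen : IsOpenMap (Quotient.mk s))
    [T0Space (Quotient s)] : IsPi02 {p : X × X | s.r p.1 p.2} := by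
  have := Quotient.secondCountableTopology hopen
  have hE : {p : X × X | s.r p.1 p.2} =
      Prod.map (Quotient.mk s) (Quotient.mk s) ⁻¹' diagonal _ := by
    ext p
    exact Quotient.eq.symm
  rw [hE]
  exact isPi02_diagonal.preimage (continuous_quotient_mk'.prodMap continuous_quotient_mk')

end Quotient

section QuotientEmbedding

variable {X : Type*} {s : Setoid X} {f : X → ℕ → Prop}

def quotCylinder (f : X → ℕ → Prop) (s : Setoid X) (G : Finset ℕ) : Set (Quotient s) :=
  Quotient.mk s '' (f ⁻¹' cylinder G)

/-- The second family forces the point built from a code (the limit of a generic sequence of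
cylinders) into `range f`; the last two make the code the whole neighbourhood filter of the image
of that point in the quotient. -/
def quotientCodes (f : X → ℕ → Prop) (s : Setoid X) (U V : ℕ → Set (ℕ → Prop)) :
    Set (Finset ℕ → Prop) :=
  {β | β ∅} ∩
  (⋂ (G : Finset ℕ) (n : ℕ), {β | cylinder G ⊆ U n ∧ β G →
    ∃ G', (G ⊆ G' ∧ cylinder G' ⊆ V n) ∧ β G'}) ∩
  (⋂ (G : Finset ℕ) (K : Finset ℕ), {β | β K ∧ β G →
    ∃ G', (G ⊆ G' ∧ quotCylinder f s G' ⊆ quotCylinder f s K) ∧ β G'}) ∩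
  (⋂ (G : Finset ℕ) (K : Finset ℕ), {β | quotCylinder f s G ⊆ quotCylinder f s K ∧ β G → β K})

theorem isPi02_quotientCodes (U V : ℕ → Set (ℕ → Prop)) : IsPi02 (quotientCodes f s U V) := by
  have hconst (p : Prop) (G : Finset ℕ) : IsOpen {β : Finset ℕ → Prop | p ∧ β G} :=
    isOpen_const.inter (isOpen_setOf_apply G)
  refine (((isOpen_setOf_apply ∅).isPi02.inter ?_).inter ?_).inter ?_
  · exact .iInter fun G => .iInter fun n =>
      isPi02_setOf_imp (hconst _ G) (isOpen_setOf_exists_and_apply _)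
  · exact .iInter fun G => .iInter fun K =>
      isPi02_setOf_imp ((isOpen_setOf_apply K).inter (isOpen_setOf_apply G))
        (isOpen_setOf_exists_and_apply _)
  · exact .iInter fun G => .iInter fun K => isPi02_setOf_imp (hconst _ G) (isOpen_setOf_apply K)

variable [TopologicalSpace X]

theorem isOpen_quotCylinder (hf : Continuous f) (hopen : IsOpenMap (Quotient.mk s))
    (G : Finset ℕ) : IsOpen (quotCylinder f s G) :=
  hopen _ ((isOpen_cylinder G).preimage hf)

theorem isTopologicalBasis_quotCylinder (hf : IsInducing f) (hopen : IsOpenMap (Quotient.mk s)) :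
    IsTopologicalBasis (range (quotCylinder f s)) := by
  convert (isTopologicalBasis_cylinder.isInducing hf).quotient hopen using 1
  rw [image_image, ← range_comp]
  rfl

theorem range_subset_quotientCodes (hf : IsInducing f) (hopen : IsOpenMap (Quotient.mk s))
    {U V : ℕ → Set (ℕ → Prop)} (hV : ∀ n, IsOpen (V n)) (hr : range f = ⋂ n, (U n)ᶜ ∪ V n) :
    range (fun y G => y ∈ quotCylinder f s G) ⊆ quotientCodes f s U V := by
  rintro _ ⟨y, rfl⟩
  obtain ⟨x, rfl⟩ := Quotient.exists_rep y
  simp only [quotientCodes, mem_inter_iff, mem_iInter, mem_ofPred_eq]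
  refine ⟨⟨⟨⟨x, mem_cylinder_empty _, rfl⟩, ?_⟩, ?_⟩, fun G K ⟨hGK, hG⟩ => hGK hG⟩
  · rintro G n ⟨hGU, x', hx'G, hx'⟩
    have hx'V : f x' ∈ V n := by
      have := hr ▸ mem_range_self x'
      exact (mem_iInter.1 this n).resolve_left (not_not_intro (hGU hx'G))
    obtain ⟨G', hGG', hx'G', hG'V⟩ := exists_superset_cylinder_subset (hV n) hx'V hx'G
    exact ⟨G', ⟨hGG', hG'V⟩, x', hx'G', hx'⟩
  · rintro G K ⟨hK, x', hx'G, hx'⟩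
    have hx'K : x' ∈ Quotient.mk s ⁻¹' quotCylinder f s K := by
      rw [mem_preimage, hx']
      exact hK
    obtain ⟨G', hGG', hx'G', hG'K⟩ := exists_superset_preimage_cylinder_subset hf
      ((isOpen_quotCylinder hf.continuous hopen K).preimage continuous_quotient_mk') hx'K hx'G
    exact ⟨G', ⟨hGG', image_subset_iff.2 hG'K⟩, x', hx'G', hx'⟩

theorem quotientCodes_subset_range (hf : IsInducing f) (hopen : IsOpenMap (Quotient.mk s))
    {U V : ℕ → Set (ℕ → Prop)} (hU : ∀ n, IsOpen (U n)) (hr : range f = ⋂ n, (U n)ᶜ ∪ V n) :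
    quotientCodes f s U V ⊆ range (fun y G => y ∈ quotCylinder f s G) := by
  intro β hβ
  simp only [quotientCodes, mem_inter_iff, mem_iInter, mem_ofPred_eq] at hβ
  obtain ⟨⟨⟨hβ₀, hβV⟩, hβK⟩, hβmono⟩ := hβ
  obtain ⟨t, ht, htβ, htK, hlim⟩ := exists_monotone_limPoint_mem (P := {G | β G}) ⟨∅, hβ₀⟩ hU
    (fun G hG n hGU => let ⟨G', ⟨hGG', hG'V⟩, hG'⟩ := hβV G n ⟨hGU, hG⟩; ⟨G', hG', hGG', hG'V⟩)
    (fun K : {K // β K} => {G | quotCylinder f s G ⊆ quotCylinder f s K})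
    (fun K G hG => let ⟨G', ⟨hGG', hG'K⟩, hG'⟩ := hβK G K ⟨K.2, hG⟩; ⟨G', hG', hGG', hG'K⟩)
  obtain ⟨x, hx⟩ := hr ▸ hlim
  refine ⟨Quotient.mk s x, funext fun K => propext ⟨fun hxK => ?_, fun hK => ?_⟩⟩
  · obtain ⟨G, -, hxG, hGK⟩ := exists_superset_preimage_cylinder_subset hf
      ((isOpen_quotCylinder hf.continuous hopen K).preimage continuous_quotient_mk') hxK
      (mem_cylinder_empty _)
    obtain ⟨i, hi⟩ := ht.exists_subset_of_limPoint_mem_cylinder (hx ▸ hxG)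
    exact hβmono (t i) K ⟨image_subset_iff.2 ((preimage_mono (cylinder_anti hi)).trans hGK), htβ i⟩
  · obtain ⟨n, hn⟩ := htK ⟨K, hK⟩
    exact hn ⟨x, mem_preimage.2 (hx ▸ limPoint_mem_cylinder t n), rfl⟩

theorem QuasiPolish.quotient (hX : QuasiPolish X) (hopen : IsOpenMap (Quotient.mk s))
    [T0Space (Quotient s)] : QuasiPolish (Quotient s) := by
  obtain ⟨f, hf, U, V, hU, hV, hr⟩ := hX
  refine QuasiPolish.of_isEmbedding (Denumerable.eqv (Finset ℕ))
    (isTopologicalBasis_quotCylinder hf.isInducing hopen).isEmbedding_mem ?_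
  rw [(range_subset_quotientCodes hf.isInducing hopen hV hr).antisymm
    (quotientCodes_subset_range hf.isInducing hopen hU hr)]
  exact isPi02_quotientCodes U V

end QuotientEmbedding

/-- quasi-Polish Sierpiński theorem. For a quasi-Polish space
`X` and an equivalence relation `E` (a setoid `s`) on `X` whose quotient map is
open, the following are equivalent: `X/E` is quasi-Polish; `X/E` is `T₀`;
`E ⊆ X²` is `Π⁰₂`; every `E`-class is `Π⁰₂`. -/
theorem stmt_12 {X : Type*} [TopologicalSpace X] (hX : QuasiPolish X)
    (s : Setoid X) (hopen : IsOpenMap (Quotient.mk s)) :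
    List.TFAE [QuasiPolish (Quotient s),
      T0Space (Quotient s),
      IsPi02 {p : X × X | s.r p.1 p.2},
      ∀ x : X, IsPi02 {y : X | s.r x y}] := by
  have := hX.secondCountableTopology
  tfae_have 1 → 2 := QuasiPolish.t0Space
  tfae_have 2 → 3 := fun _ => isPi02_rel_of_t0Space hopen
  tfae_have 3 → 4 := fun h x => h.preimage (continuous_const.prodMk continuous_id)
  tfae_have 4 → 2 := t0Space_quotient_of_forall_isPi02 hX hopen
  tfae_have 2 → 1 := fun _ => hX.quotient hopen
  tfae_finish
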